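/- For every odd prime p, every k ∈ ZMod p with k ≠ 0, every i ∈ (ZMod p) ∪ {∞} and every j ∈ ZMod p, the matrix P_{k;i,j} := (1/p) ∑_{a ∈ A_{i,j}} ρ_k(a) equals the rank-one orthogonal projection |ψ_{k;i,j}⟩⟨ψ_{k;i,j}| onto the span of the unit vector ψ_{k;i,j}; that is, the (μ,ν) entry of P_{k;i,j} equals (ψ_{k;i,j})_μ · conj((ψ_{k;i,j})_ν). -/

import Mathlib

@[ext]
structure Heis (p : ℕ) where
  x : ZMod p
  y : ZMod p
  z : ZMod p

namespace Heis

variable {p : ℕ}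

instance : Mul (Heis p) := ⟨fun a b => ⟨a.x + b.x, a.y + b.y, a.z + b.z + a.x * b.y⟩⟩
instance : One (Heis p) := ⟨⟨0, 0, 0⟩⟩
instance : Inv (Heis p) := ⟨fun a => ⟨-a.x, -a.y, a.x * a.y - a.z⟩⟩

lemma mul_def (a b : Heis p) :
    a * b = ⟨a.x + b.x, a.y + b.y, a.z + b.z + a.x * b.y⟩ := rfl
lemma one_def : (1 : Heis p) = ⟨0, 0, 0⟩ := rfl
lemma inv_def (a : Heis p) : a⁻¹ = ⟨-a.x, -a.y, a.x * a.y - a.z⟩ := rfl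

instance instGroup : Group (Heis p) where
  mul_assoc a b c := by ext <;> simp [mul_def] <;> ring
  one_mul a := by ext <;> simp [mul_def, one_def]
  mul_one a := by ext <;> simp [mul_def, one_def]
  inv_mul_cancel a := by ext <;> simp [mul_def, inv_def, one_def]

end Heis

/-- The cyclic subgroups A_{i,j} of order p; `A p (some i) j = ⟨(1,i,j)⟩`,
`A p none j = ⟨(0,1,j)⟩`. -/
def A (p : ℕ) : Option (ZMod p) → ZMod p → Subgroup (Heis p)
  | some i, j => Subgroup.zpowers (⟨1, i, j⟩ : Heis p)
  | none, j => Subgroup.zpowers (⟨0, 1, j⟩ : Heis p)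

/-- `ω^v = exp(2πi·v.val/p)` for `v : ZMod p`, where `ω = exp(2πi/p)`. -/
noncomputable def omegaPow (p : ℕ) (v : ZMod p) : ℂ :=
  Complex.exp (2 * Real.pi * Complex.I * (v.val : ℂ) / p)

/-- The degree-`p` representation `ρ_k` of `H_p` (`k ≠ 0`), as a matrix-valued function:
the `(a,b)` entry of `ρ_k(x,y,z)` is `ω^{k(z+ya)}` if `b = a + x`, and `0` otherwise. -/
noncomputable def rho (p : ℕ) (k : ZMod p) (g : Heis p) :
    Matrix (ZMod p) (ZMod p) ℂ :=
  Matrix.of fun a b => if b = a + g.x then omegaPow p (k * (g.z + g.y * a)) else 0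

/-- The unit vectors `ψ_{k;i,j} ∈ ℂ^{ZMod p}`:
`ψ_{k;i,j} = p^{-1/2} ∑_μ ω^{-k((μ(μ-1)/2)i + μj)} e_μ` for `i ∈ ZMod p`, and
`ψ_{k;∞,j} = e_{-j}`. -/
noncomputable def psi (p : ℕ) (k : ZMod p) : Option (ZMod p) → ZMod p → ZMod p → ℂ
  | some i, j => fun μ =>
      ((Real.sqrt p : ℝ) : ℂ)⁻¹ *
        omegaPow p (-(k * (μ * (μ - 1) * (2 : ZMod p)⁻¹ * i + μ * j)))
  | none, j => fun μ => if μ = -j then 1 else 0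

/-! Each `A_{i,j}` is the image of an injective homomorphism `n ↦ γ n` from `ZMod p`: for finite
`i`, `γ n = (n, n i, q n)` with `q μ = μ(μ-1)/2 · i + μ j` the phase of `ψ_{k;i,j}`, and for
`i = ∞`, `γ n = (0, n, n j)`. For finite `i` the only nonzero entry of row `μ` of `ρ_k(γ n)` sits
in column `μ + n`, and the cocycle identity `q (μ + n) = q μ + q n + μ n i` makes it
`ω^{k(q(μ+n) - q μ)}`; summing over `n` gives `ω^{k(q ν - q μ)} = p ψ_μ conj ψ_ν` in every entry.
For `i = ∞` the matrices are diagonal, and the sum over `n` of the diagonal entries is a character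
sum `∑ₙ ω^{n k (j + μ)}`, which vanishes unless `μ = -j`. -/

open Subgroup Function Multiplicative ComplexConjugate

lemma ZMod.zpowers_ofAdd_one (n : ℕ) : zpowers (ofAdd (1 : ZMod n)) = ⊤ := by
  refine eq_top_iff.2 fun x _ => ?_
  obtain ⟨m, hm⟩ := ZMod.intCast_surjective x.toAdd
  exact ⟨m, by dsimp only; rw [← ofAdd_zsmul, zsmul_one, hm, ofAdd_toAdd]⟩

lemma finsum_mem_zpowers_eq_sum {G M : Type*} [Group G] [AddCommMonoid M] {n : ℕ} [NeZero n]
    (f : Multiplicative (ZMod n) →* G) (hf : Injective f) (φ : G → M) :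
    ∑ᶠ a ∈ (zpowers (f (ofAdd 1)) : Set G), φ a = ∑ m : ZMod n, φ (f (ofAdd m)) := by
  rw [← MonoidHom.map_zpowers, ZMod.zpowers_ofAdd_one, ← MonoidHom.range_eq_map,
    MonoidHom.coe_range, finsum_mem_range hf, finsum_eq_sum_of_fintype, ← ofAdd.sum_comp]

section

variable {p : ℕ}

def phase (i j μ : ZMod p) : ZMod p := μ * (μ - 1) * 2⁻¹ * i + μ * j

lemma phase_add (hp : Odd p) (i j μ ν : ZMod p) :
    phase i j (μ + ν) = phase i j μ + phase i j ν + μ * (ν * i) := by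
  have h2 : (2 : ZMod p) * 2⁻¹ = 1 := ZMod.mul_inv_of_unit _ <| by
    exact_mod_cast (ZMod.isUnit_iff_coprime 2 p).2 (Nat.coprime_two_left.2 hp)
  unfold phase
  linear_combination (μ * ν * i) * h2

lemma psi_some (k i j μ : ZMod p) :
    psi p k (some i) j μ = ((√p : ℝ) : ℂ)⁻¹ * omegaPow p (-(k * phase i j μ)) := rfl

namespace Heis

def verticalLine (j : ZMod p) : Multiplicative (ZMod p) →* Heis p where
  toFun n := ⟨0, n.toAdd, n.toAdd * j⟩
  map_one' := by ext <;> simp [one_def]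
  map_mul' a b := by ext <;> simp [mul_def]; ring

def parabolicLine (hp : Odd p) (i j : ZMod p) : Multiplicative (ZMod p) →* Heis p where
  toFun n := ⟨n.toAdd, n.toAdd * i, phase i j n.toAdd⟩
  map_one' := by ext <;> simp [one_def, phase]
  map_mul' a b := by ext <;> simp [mul_def, phase_add hp]; ring

lemma verticalLine_ofAdd (j n : ZMod p) : verticalLine j (ofAdd n) = ⟨0, n, n * j⟩ := rfl

lemma parabolicLine_ofAdd (hp : Odd p) (i j n : ZMod p) :
    parabolicLine hp i j (ofAdd n) = ⟨n, n * i, phase i j n⟩ := rfl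

lemma verticalLine_injective (j : ZMod p) : Injective (verticalLine j) :=
  fun _ _ h => congrArg Heis.y h

lemma parabolicLine_injective (hp : Odd p) (i j : ZMod p) : Injective (parabolicLine hp i j) :=
  fun _ _ h => congrArg Heis.x h

end Heis

open Heis

lemma A_none_eq_zpowers (j : ZMod p) : A p none j = zpowers (verticalLine j (ofAdd 1)) := by
  rw [verticalLine_ofAdd, one_mul]
  rfl

lemma A_some_eq_zpowers (hp : Odd p) (i j : ZMod p) :
    A p (some i) j = zpowers (parabolicLine hp i j (ofAdd 1)) := by
  rw [parabolicLine_ofAdd, one_mul, show phase i j 1 = j by simp [phase]]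
  rfl

variable [NeZero p]

lemma omegaPow_eq_stdAddChar : omegaPow p = ZMod.stdAddChar := by
  funext v
  rw [ZMod.stdAddChar_apply, ZMod.toCircle_apply]
  rfl

lemma sum_omegaPow_mul_right (c : ZMod p) :
    ∑ n : ZMod p, omegaPow p (n * c) = if c = 0 then (p : ℂ) else 0 := by
  rw [omegaPow_eq_stdAddChar, AddChar.sum_mulShift _ (ZMod.isPrimitive_stdAddChar p), ZMod.card]
  push_cast
  rfl

lemma omegaPow_sub (u v : ZMod p) : omegaPow p (u - v) = omegaPow p (-v) * omegaPow p u := by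
  rw [sub_eq_neg_add, omegaPow_eq_stdAddChar, AddChar.map_add_eq_mul]

lemma conj_omegaPow_neg (v : ZMod p) : conj (omegaPow p (-v)) = omegaPow p v := by
  rw [omegaPow_eq_stdAddChar, AddChar.map_neg_eq_conj, Complex.conj_conj]

lemma norm_omegaPow (v : ZMod p) : ‖omegaPow p v‖ = 1 := by
  rw [omegaPow_eq_stdAddChar, AddChar.norm_apply]

variable (k : ZMod p)

lemma sum_rho_verticalLine_apply (j μ ν : ZMod p) :
    (∑ n, rho p k (verticalLine j (ofAdd n))) μ ν =
      if ν = μ then ∑ n, omegaPow p (n * (k * (j + μ))) else 0 := by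
  simp only [Matrix.sum_apply, rho, Matrix.of_apply, verticalLine_ofAdd, add_zero]
  split_ifs
  · exact Finset.sum_congr rfl fun n _ => by ring_nf
  · exact Finset.sum_const_zero

lemma sum_rho_parabolicLine_apply (hp : Odd p) (i j μ ν : ZMod p) :
    (∑ n, rho p k (parabolicLine hp i j (ofAdd n))) μ ν =
      omegaPow p (k * (phase i j ν - phase i j μ)) := by
  have hshift : phase i j (ν - μ) + (ν - μ) * i * μ = phase i j ν - phase i j μ := by
    have h := phase_add hp i j μ (ν - μ)
    rw [add_sub_cancel] at h
    linear_combination -h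
  simp only [Matrix.sum_apply, rho, Matrix.of_apply, parabolicLine_ofAdd, ← sub_eq_iff_eq_add',
    Finset.sum_ite_eq, Finset.mem_univ, if_true, hshift]

theorem smul_finsum_rho_A_none (hp : p.Prime) (hk : k ≠ 0) (j : ZMod p) :
    (p : ℂ)⁻¹ • ∑ᶠ a ∈ (A p none j : Set (Heis p)), rho p k a =
      Matrix.of fun μ ν => psi p k none j μ * conj (psi p k none j ν) := by
  have := Fact.mk hp
  rw [A_none_eq_zpowers, finsum_mem_zpowers_eq_sum _ (verticalLine_injective j)]
  ext μ ν
  have hcenter : k * (j + μ) = 0 ↔ μ = -j := by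
    rw [mul_eq_zero, or_iff_right hk, add_eq_zero_iff_eq_neg']
  have hp0 : (p : ℂ) ≠ 0 := NeZero.ne _
  simp only [Matrix.smul_apply, sum_rho_verticalLine_apply, sum_omegaPow_mul_right, hcenter, psi,
    Matrix.of_apply]
  split_ifs <;> simp_all

theorem smul_finsum_rho_A_some (hp : Odd p) (i j : ZMod p) :
    (p : ℂ)⁻¹ • ∑ᶠ a ∈ (A p (some i) j : Set (Heis p)), rho p k a =
      Matrix.of fun μ ν => psi p k (some i) j μ * conj (psi p k (some i) j ν) := by
  rw [A_some_eq_zpowers hp, finsum_mem_zpowers_eq_sum _ (parabolicLine_injective hp i j)]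
  ext μ ν
  have hsqrt : ((√p : ℝ) : ℂ)⁻¹ * ((√p : ℝ) : ℂ)⁻¹ = (p : ℂ)⁻¹ := by
    rw [← mul_inv, ← Complex.ofReal_mul, Real.mul_self_sqrt p.cast_nonneg, Complex.ofReal_natCast]
  rw [Matrix.smul_apply, sum_rho_parabolicLine_apply, mul_sub, omegaPow_sub]
  simp only [psi_some, Matrix.of_apply, map_mul, map_inv₀, Complex.conj_ofReal, conj_omegaPow_neg,
    smul_eq_mul, ← hsqrt]
  ring

lemma sum_norm_psi_sq (i : Option (ZMod p)) (j : ZMod p) :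
    ∑ μ : ZMod p, ‖psi p k i j μ‖ ^ 2 = 1 := by
  cases i with
  | none => simp [psi, apply_ite]
  | some i => simp [psi, norm_omegaPow]

end

/-- For every odd prime `p`, every `k ≠ 0`, every `i ∈ ZMod p ∪ {∞}` and
every `j ∈ ZMod p`, the matrix `P_{k;i,j} := (1/p) ∑_{a ∈ A_{i,j}} ρ_k(a)` equals the
rank-one orthogonal projection `|ψ_{k;i,j}⟩⟨ψ_{k;i,j}|` onto the span of the unit vector
`ψ_{k;i,j}`: the `(μ,ν)` entry of `P_{k;i,j}` is `(ψ_{k;i,j})_μ · conj((ψ_{k;i,j})_ν)`,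
and `ψ_{k;i,j}` is a unit vector. -/
theorem heisenberg_averaged_projector (p : ℕ) [NeZero p] (hp : p.Prime) (ho : Odd p)
    (k : ZMod p) (hk : k ≠ 0) (i : Option (ZMod p)) (j : ZMod p) :
    ((p : ℂ)⁻¹ • ∑ᶠ a ∈ (A p i j : Set (Heis p)), rho p k a) =
      Matrix.of (fun μ ν => psi p k i j μ * (starRingEnd ℂ) (psi p k i j ν)) ∧
    ∑ μ : ZMod p, ‖psi p k i j μ‖ ^ 2 = 1 := by
  refine ⟨?_, sum_norm_psi_sq k i j⟩
  cases i with
  | none => exact smul_finsum_rho_A_none k hp hk j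
  | some i => exact smul_finsum_rho_A_some k ho i j
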